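/- arXiv:2605.08896 — 2 statements merged into one kernel-verified Lean document; each statement's English description precedes it below -/
import Mathlib

section
/- Let K ≥ 2, let s : {1,…,K} → ℝ, let j ∈ {1,…,K}, let γ ≥ 0, κ > 0, and let η ∈ (0,1] be such that g_{γ,κ}(Δ_s(j)) ≥ η whenever Δ_s(j) ≤ γ. Then the indicator of margin failure is pointwise dominated: 1{Δ_s(j) ≤ γ} ≤ η^{−1} (1 + e^{γ}) · g_{γ,κ}(Δ_s(j)) · (1 − p_s(j)). Moreover, for the logistic gate one may always take η = 1/2, since Δ ≤ γ implies σ((γ − Δ)/κ) ≥ 1/2. -/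
/-- Option margin: `Δ_s(y) = s(y) - max_{k ≠ y} s(k)`. -/
noncomputable def optionMargin {K : ℕ} (s : Fin K → ℝ) (y : Fin K) : ℝ :=
  s y - ⨆ k : {k : Fin K // k ≠ y}, s k.1

/-- Softmax probability `p_s(j) = exp(s j) / Σ_k exp(s k)`. -/
noncomputable def softmaxProb {K : ℕ} (s : Fin K → ℝ) (j : Fin K) : ℝ :=
  Real.exp (s j) / ∑ k : Fin K, Real.exp (s k)

/-- Logistic sigmoid `σ(t) = 1/(1+e^{-t})`. -/
noncomputable def logisticSigmoid (t : ℝ) : ℝ := 1 / (1 + Real.exp (-t))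

/-- Margin gate `g_{γ,κ}(Δ) = σ((γ - Δ)/κ)`. -/
noncomputable def gate (γ κ Δ : ℝ) : ℝ := logisticSigmoid ((γ - Δ) / κ)

/-! On the failure event `Δ_s(j) ≤ γ` some rival `k ≠ j` has `s j ≤ s k + γ`, so
`p_s(j) ≤ e^γ p_s(k) ≤ e^γ (1 - p_s(j))`, i.e. `1 ≤ (1 + e^γ)(1 - p_s(j))`; multiplying by
`g / η ≥ 1` gives the domination. Off the failure event the right-hand side is nonnegative. -/

open Real

lemma logisticSigmoid_pos (t : ℝ) : 0 < logisticSigmoid t := by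
  unfold logisticSigmoid
  positivity

lemma one_half_le_logisticSigmoid {t : ℝ} (ht : 0 ≤ t) : 1 / 2 ≤ logisticSigmoid t := by
  have : exp (-t) ≤ 1 := exp_le_one_iff.mpr (neg_nonpos.mpr ht)
  unfold logisticSigmoid
  gcongr
  linarith

lemma one_half_le_gate {γ κ Δ : ℝ} (hκ : 0 < κ) (h : Δ ≤ γ) : 1 / 2 ≤ gate γ κ Δ :=
  one_half_le_logisticSigmoid (div_nonneg (sub_nonneg.mpr h) hκ.le)

section Softmax

variable {K : ℕ} (s : Fin K → ℝ)

lemma sum_exp_pos (j : Fin K) : 0 < ∑ k : Fin K, exp (s k) :=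
  Finset.sum_pos (fun k _ => exp_pos (s k)) ⟨j, Finset.mem_univ j⟩

lemma softmaxProb_nonneg (j : Fin K) : 0 ≤ softmaxProb s j := by
  unfold softmaxProb
  positivity

lemma softmaxProb_add_softmaxProb_le_one {j k : Fin K} (hkj : k ≠ j) :
    softmaxProb s j + softmaxProb s k ≤ 1 := by
  unfold softmaxProb
  rw [← add_div, div_le_one (sum_exp_pos s j),
    ← Finset.sum_pair (f := fun i => exp (s i)) hkj.symm]
  exact Finset.sum_le_univ_sum_of_nonneg fun k => (exp_pos (s k)).le

lemma softmaxProb_le_one (j : Fin K) : softmaxProb s j ≤ 1 := by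
  unfold softmaxProb
  rw [div_le_one (sum_exp_pos s j)]
  exact Finset.single_le_sum (fun k _ => (exp_pos (s k)).le) (Finset.mem_univ j)

lemma softmaxProb_eq_exp_sub_mul (j k : Fin K) :
    softmaxProb s j = exp (s j - s k) * softmaxProb s k := by
  unfold softmaxProb
  rw [mul_div_assoc', ← exp_add, sub_add_cancel]

lemma one_le_one_add_exp_mul_one_sub_softmaxProb {γ : ℝ} {j k : Fin K} (hkj : k ≠ j)
    (h : s j - s k ≤ γ) : 1 ≤ (1 + exp γ) * (1 - softmaxProb s j) := by
  have hpk := softmaxProb_add_softmaxProb_le_one s hkj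
  have hpj : softmaxProb s j ≤ exp γ * softmaxProb s k := by
    rw [softmaxProb_eq_exp_sub_mul s j k]
    exact mul_le_mul_of_nonneg_right (exp_le_exp.mpr h) (softmaxProb_nonneg s k)
  nlinarith [exp_pos γ]

end Softmax

lemma exists_ne_optionMargin_eq {K : ℕ} (hK : 2 ≤ K) (s : Fin K → ℝ) (j : Fin K) :
    ∃ k ≠ j, optionMargin s j = s j - s k := by
  have : Nontrivial (Fin K) := Fin.nontrivial_iff_two_le.mpr hK
  have : Nonempty {k : Fin K // k ≠ j} := nonempty_subtype.mpr (exists_ne j)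
  obtain ⟨⟨k, hkj⟩, hk⟩ := exists_eq_ciSup_of_finite (f := fun k : {k : Fin K // k ≠ j} => s k.1)
  exact ⟨k, hkj, by rw [optionMargin, ← hk]⟩

theorem indicator_dominated_by_gated_mass_general {K : ℕ} (hK : 2 ≤ K) (s : Fin K → ℝ)
    (j : Fin K) (γ κ η : ℝ) (hκ : 0 < κ) (hη0 : 0 < η)
    (hgate : optionMargin s j ≤ γ → η ≤ gate γ κ (optionMargin s j)) :
    (if optionMargin s j ≤ γ then (1 : ℝ) else 0) ≤
      η⁻¹ * (1 + Real.exp γ) * (gate γ κ (optionMargin s j) * (1 - softmaxProb s j)) ∧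
    ∀ Δ : ℝ, Δ ≤ γ → (1 : ℝ) / 2 ≤ gate γ κ Δ := by
  refine ⟨?_, fun Δ => one_half_le_gate hκ⟩
  set g := gate γ κ (optionMargin s j)
  have hg : 0 < g := logisticSigmoid_pos _
  split_ifs with hfail
  · obtain ⟨k, hkj, hk⟩ := exists_ne_optionMargin_eq hK s j
    have hmass := one_le_one_add_exp_mul_one_sub_softmaxProb s hkj (hk ▸ hfail)
    have hgη : 1 ≤ η⁻¹ * g := by
      rw [inv_mul_eq_div, one_le_div hη0]
      exact hgate hfail
    calc 1 ≤ (1 + exp γ) * (1 - softmaxProb s j) := hmass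
      _ ≤ η⁻¹ * g * ((1 + exp γ) * (1 - softmaxProb s j)) :=
        le_mul_of_one_le_left (zero_le_one.trans hmass) hgη
      _ = η⁻¹ * (1 + exp γ) * (g * (1 - softmaxProb s j)) := by ring
  · have hp := sub_nonneg.mpr (softmaxProb_le_one s j)
    positivity

/-- The indicator of margin failure `1{Δ_s(j) ≤ γ}` is pointwise dominated by
`η⁻¹ (1+e^γ) · g_{γ,κ}(Δ_s(j)) · (1 - p_s(j))` whenever the gate is at least `η` on the
failure region; moreover the logistic gate always admits `η = 1/2`. -/
theorem indicator_dominated_by_gated_mass {K : ℕ} (hK : 2 ≤ K) (s : Fin K → ℝ)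
    (j : Fin K) (γ κ η : ℝ) (hγ : 0 ≤ γ) (hκ : 0 < κ) (hη0 : 0 < η) (hη1 : η ≤ 1)
    (hgate : optionMargin s j ≤ γ → η ≤ gate γ κ (optionMargin s j)) :
    (if optionMargin s j ≤ γ then (1 : ℝ) else 0) ≤
      η⁻¹ * (1 + Real.exp γ) * (gate γ κ (optionMargin s j) * (1 - softmaxProb s j)) ∧
    ∀ Δ : ℝ, Δ ≤ γ → (1 : ℝ) / 2 ≤ gate γ κ Δ :=
  indicator_dominated_by_gated_mass_general hK s j γ κ η hκ hη0 hgate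
end

section
/- Let W = ℝ^{d} and let Q be a probability measure on W with finite mean μ := E_{w∼Q}[w]. Fix γ ≥ 0 and ρ ∈ [0,1], and assume the posterior logit-stability condition: Q({w : sup_{x∈X} max_{k∈{1,…,K}} |s_w(x,k) − s_μ(x,k)| ≤ γ/2}) ≥ 1 − ρ. Then the deterministic worst-class risk of the mean model satisfies WCR^{det}(μ;D') ≤ R_{mf,γ}(Q;D') + ρ. -/
open MeasureTheory

/-- Posterior margin-failure risk
`R_{mf,γ}(Q;D') = max_j E_{x∼D'_j}[Q({w : Δ_w(x,j) ≤ γ})]`. -/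
noncomputable def Rmf {X W : Type*} [MeasurableSpace X] [MeasurableSpace W] {K : ℕ}
    (D : Fin K → Measure X) (s : W → X → Fin K → ℝ) (γ : ℝ) (Q : Measure W) : ℝ :=
  ⨆ j : Fin K, ∫ x, (Q {w | optionMargin (s w x) j ≤ γ}).toReal ∂(D j)

/-- Deterministic worst-class risk of the model with coordinates `μ`:
`WCR^{det}(μ;D') = max_j D'_j({x : Δ_μ(x,j) ≤ 0})`. -/
noncomputable def WCRdet {X W : Type*} [MeasurableSpace X] {K : ℕ}
    (D : Fin K → Measure X) (s : W → X → Fin K → ℝ) (μ : W) : ℝ :=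
  ⨆ j : Fin K, ((D j) {x | optionMargin (s μ x) j ≤ 0}).toReal

/-! Perturbing every score by at most `ε` moves an option margin by at most `2ε`. So
wherever the model at `μ` fails (margin `≤ 0`), every `γ/2`-stable sample fails with margin
`≤ γ`, and the posterior failure probability there is at least `1 - ρ`. Integrating the
pointwise bound `1_B ≤ Q(Δ_w(x,j) ≤ γ) + ρ` against `D'_j` gives the inequality class by class. -/

theorem optionMargin_le_add_of_abs_sub_le {K : ℕ} {s t : Fin K → ℝ} {ε : ℝ}
    (h : ∀ k, |s k - t k| ≤ ε) (j : Fin K) :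
    optionMargin s j ≤ optionMargin t j + 2 * ε := by
  have hj : s j ≤ t j + ε := by linarith [(abs_le.mp (h j)).2]
  have hsup :
      ⨆ k : {k : Fin K // k ≠ j}, t k.1 ≤ (⨆ k : {k : Fin K // k ≠ j}, s k.1) + ε := by
    rcases isEmpty_or_nonempty {k : Fin K // k ≠ j} with hempty | hne
    · simpa [iSup_of_empty'] using (abs_nonneg _).trans (h j)
    · refine ciSup_le fun k => ?_
      have hk : s k.1 ≤ ⨆ k : {k : Fin K // k ≠ j}, s k.1 :=
        le_ciSup (f := fun k : {k : Fin K // k ≠ j} => s k.1) (Set.finite_range _).bddAbove k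
      linarith [(abs_le.mp (h k.1)).1]
  unfold optionMargin
  linarith

theorem Measurable.optionMargin {α : Type*} [MeasurableSpace α] {K : ℕ}
    {f : α → Fin K → ℝ} (hf : ∀ k, Measurable fun a => f a k) (j : Fin K) :
    Measurable fun a => _root_.optionMargin (f a) j :=
  (hf j).sub (Measurable.iSup fun k => hf k.1)

theorem measureReal_le_integral_add_of_sub_le {X : Type*} [MeasurableSpace X]
    {P : Measure X} [IsProbabilityMeasure P] {B : Set X} (hB : MeasurableSet B)
    {f : X → ℝ} (hf : Integrable f P) (hf0 : ∀ x, 0 ≤ f x) {ρ : ℝ} (hρ : 0 ≤ ρ)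
    (hfB : ∀ x ∈ B, 1 - ρ ≤ f x) :
    P.real B ≤ ∫ x, f x ∂P + ρ := by
  have hpt : ∀ x, B.indicator 1 x ≤ f x + ρ := by
    intro x
    by_cases hx : x ∈ B
    · simp only [Set.indicator_of_mem hx, Pi.one_apply]; linarith [hfB x hx]
    · simp only [Set.indicator_of_notMem hx]; linarith [hf0 x]
  calc P.real B = ∫ x, B.indicator 1 x ∂P := (integral_indicator_one hB).symm
    _ ≤ ∫ x, (f x + ρ) ∂P :=
      integral_mono ((integrable_const 1).indicator hB) (hf.add (integrable_const ρ)) hpt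
    _ = ∫ x, f x ∂P + ρ := by simp [integral_add hf (integrable_const ρ)]

theorem integrable_measureReal_setOf_prod {W X : Type*} [MeasurableSpace W] [MeasurableSpace X]
    (Q : Measure W) [IsProbabilityMeasure Q] (P : Measure X) [IsFiniteMeasure P]
    {A : Set (W × X)} (hA : MeasurableSet A) :
    Integrable (fun x => Q.real {w | (w, x) ∈ A}) P := by
  have hmeas := (measurable_measure_prodMk_right (μ := Q) hA).ennreal_toReal
  refine Integrable.of_bound hmeas.aestronglyMeasurable 1 (Filter.Eventually.of_forall fun x => ?_)
  rw [Real.norm_of_nonneg measureReal_nonneg]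
  exact measureReal_le_one

theorem deterministic_bridge_general {X : Type*} [MeasurableSpace X] {K d : ℕ}
    (D : Fin K → Measure X) (hD : ∀ j, IsProbabilityMeasure (D j))
    (s : (Fin d → ℝ) → X → Fin K → ℝ)
    (hs : ∀ k : Fin K, Measurable fun p : (Fin d → ℝ) × X => s p.1 p.2 k)
    (γ ρ : ℝ) (hρ0 : 0 ≤ ρ)
    (Q : Measure (Fin d → ℝ)) (hQ : IsProbabilityMeasure Q)
    (μmean : Fin d → ℝ)
    (hstab : 1 - ρ ≤
      (Q {w | ∀ (x : X) (k : Fin K), |s w x k - s μmean x k| ≤ γ / 2}).toReal) :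
    WCRdet D s μmean ≤ Rmf D s γ Q + ρ := by
  have hmargin : ∀ j, Measurable fun p : (Fin d → ℝ) × X => optionMargin (s p.1 p.2) j :=
    Measurable.optionMargin hs
  have hRmf_nonneg : 0 ≤ Rmf D s γ Q :=
    Real.iSup_nonneg fun j => integral_nonneg fun _ => ENNReal.toReal_nonneg
  refine Real.iSup_le (fun j => ?_) (by linarith)
  have hB : MeasurableSet {x | optionMargin (s μmean x) j ≤ 0} :=
    (hmargin j).comp measurable_prodMk_left measurableSet_Iic
  have hA : MeasurableSet {p : (Fin d → ℝ) × X | optionMargin (s p.1 p.2) j ≤ γ} :=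
    hmargin j measurableSet_Iic
  have hfail_mass : ∀ x, optionMargin (s μmean x) j ≤ 0 →
      1 - ρ ≤ Q.real {w | optionMargin (s w x) j ≤ γ} := fun x hx =>
    hstab.trans <| measureReal_mono fun w hw => by
      have := optionMargin_le_add_of_abs_sub_le (hw x) j
      show optionMargin (s w x) j ≤ γ
      linarith
  calc ((D j) {x | optionMargin (s μmean x) j ≤ 0}).toReal
      ≤ ∫ x, Q.real {w | optionMargin (s w x) j ≤ γ} ∂(D j) + ρ :=
        measureReal_le_integral_add_of_sub_le hB (integrable_measureReal_setOf_prod Q (D j) hA)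
          (fun _ => measureReal_nonneg) hρ0 hfail_mass
    _ ≤ Rmf D s γ Q + ρ := by
      gcongr
      exact le_ciSup (f := fun j => ∫ x, Q.real {w | optionMargin (s w x) j ≤ γ} ∂(D j))
        (Set.finite_range _).bddAbove j

/-- Risk-level Gibbs-to-deterministic bridge under posterior logit stability:
if `Q`-most samples `w` have all scores within `γ/2` of the mean model `μ = E_Q[w]`,
then `WCR^{det}(μ;D') ≤ R_{mf,γ}(Q;D') + ρ`. -/
theorem deterministic_bridge {X : Type*} [MeasurableSpace X] {K d : ℕ} (hK : 2 ≤ K)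
    (D : Fin K → Measure X) (hD : ∀ j, IsProbabilityMeasure (D j))
    (s : (Fin d → ℝ) → X → Fin K → ℝ)
    (hs : ∀ k : Fin K, Measurable fun p : (Fin d → ℝ) × X => s p.1 p.2 k)
    (γ ρ : ℝ) (hγ : 0 ≤ γ) (hρ0 : 0 ≤ ρ) (hρ1 : ρ ≤ 1)
    (Q : Measure (Fin d → ℝ)) (hQ : IsProbabilityMeasure Q)
    (hint : Integrable (fun w => w) Q)
    (μmean : Fin d → ℝ) (hμ : μmean = ∫ w, w ∂Q)
    (hstab : 1 - ρ ≤
      (Q {w | ∀ (x : X) (k : Fin K), |s w x k - s μmean x k| ≤ γ / 2}).toReal) :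
    WCRdet D s μmean ≤ Rmf D s γ Q + ρ :=
  deterministic_bridge_general D hD s hs γ ρ hρ0 Q hQ μmean hstab
end
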